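/- In any condition algebra M (in the total, unrestricted sense) that additionally satisfies the copy equation A⁰A¹ = A for all A ∈ M: the two copy operations collapse, i.e. A⁰ = A¹ for every A ∈ M. -/

import Mathlib

/-!
Write `e` for `I⁻`. Inverting `A⁰(A¹)⁻ = I` gives `(A⁰)⁻A¹ = e`, so under the copy equation
`AA⁻ = (A⁰(A¹)⁻)((A⁰)⁻A¹) = e` for every `A`. Hence `A¹ = A⁰(A¹)⁻A¹ = A⁰e`, and substituting this
into `I = I⁰(I¹)⁻` yields `I = I⁰(I⁰)⁻e⁻ = e`, so `A¹ = A⁰`.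
-/

/-- A condition algebra (in the total, unrestricted sense): a commutative
monoid with an inversion and two copy operations. -/
class ConditionAlgebra (M : Type*) extends CommMonoid M where
  inv : M → M
  c0 : M → M
  c1 : M → M
  inv_inv : ∀ A : M, inv (inv A) = A
  inv_mul : ∀ A B : M, inv (A * B) = inv A * inv B
  c0_mul : ∀ A B : M, c0 (A * B) = c0 A * c0 B
  c1_mul : ∀ A B : M, c1 (A * B) = c1 A * c1 B
  copy_cancel : ∀ A : M, c0 A * inv (c1 A) = 1

namespace ConditionAlgebra

variable {M : Type*} [ConditionAlgebra M]

theorem inv_c0_mul_c1 (A : M) : inv (c0 A) * c1 A = inv 1 := by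
  rw [← copy_cancel A, inv_mul, ConditionAlgebra.inv_inv]

theorem mul_inv_self_of_copy_eq (copy_eq : ∀ A : M, c0 A * c1 A = A) (A : M) :
    A * inv A = inv 1 :=
  calc A * inv A = (c0 A * c1 A) * inv (c0 A * c1 A) := by rw [copy_eq]
    _ = (c0 A * inv (c1 A)) * (inv (c0 A) * c1 A) := by rw [inv_mul]; ac_rfl
    _ = inv 1 := by rw [copy_cancel, inv_c0_mul_c1, one_mul]

theorem c1_eq_c0_mul_inv_one (mul_inv_self : ∀ A : M, A * inv A = inv 1) (A : M) :
    c1 A = c0 A * inv 1 :=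
  calc c1 A = (c0 A * inv (c1 A)) * c1 A := by rw [copy_cancel, one_mul]
    _ = c0 A * (c1 A * inv (c1 A)) := by ac_rfl
    _ = c0 A * inv 1 := by rw [mul_inv_self]

theorem inv_one_eq_one (mul_inv_self : ∀ A : M, A * inv A = inv 1) :
    inv (1 : M) = 1 :=
  calc inv (1 : M) = (c0 1 * inv (c0 1)) * inv (inv 1) := by
        rw [mul_inv_self, ConditionAlgebra.inv_inv, mul_one]
    _ = c0 1 * inv (c1 1) := by rw [c1_eq_c0_mul_inv_one mul_inv_self, inv_mul, mul_assoc]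
    _ = 1 := copy_cancel 1

end ConditionAlgebra

open ConditionAlgebra in
/-- With the copy equation A⁰A¹ = A, the two copy operations collapse. -/
theorem copies_collapse (M : Type*) [ConditionAlgebra M]
    (copy_eq : ∀ A : M, c0 A * c1 A = A) :
    ∀ A : M, c0 A = c1 A := by
  have mul_inv_self := mul_inv_self_of_copy_eq copy_eq
  intro A
  rw [c1_eq_c0_mul_inv_one mul_inv_self, inv_one_eq_one mul_inv_self, mul_one]
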